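/- arXiv:2408.13260 — 2 statements merged into one kernel-verified Lean document; each statement's English description precedes it below -/
import Mathlib

section
/- A non-trivial fuzzy graph G of size q satisfies γ_snR(G) = 2q if and only if every edge of G is strong and every vertex is either isolated or has exactly one strong neighbor (i.e., the strong edges form a perfect matching on the non-isolated vertices and there are no non-strong edges). -/
noncomputable section
open scoped Classical
open Finset

/-- A fuzzy graph on a vertex set `V`. -/
structure FuzzyGraph (V : Type*) where
  σ : V → ℝ
  μ : V → V → ℝ
  σ_nonneg : ∀ v, 0 ≤ σ v
  σ_le_one : ∀ v, σ v ≤ 1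
  μ_nonneg : ∀ u v, 0 ≤ μ u v
  μ_symm : ∀ u v, μ u v = μ v u
  μ_le : ∀ u v, μ u v ≤ min (σ u) (σ v)
  μ_irrefl : ∀ v, μ v v = 0

namespace FuzzyGraph

variable {V : Type*} (G : FuzzyGraph V)

/-- The strength of a walk (given as its list of vertices): the minimum
membership value of its edges (1 for walks without edges). -/
def walkStrength (l : List V) : ℝ :=
  ((l.zip l.tail).map fun p => G.μ p.1 p.2).foldr min 1

/-- `l` is a `u`–`v` walk: it starts at `u`, ends at `v`, and consecutive
vertices are joined by edges of positive membership. -/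
def IsWalk (u v : V) (l : List V) : Prop :=
  l.head? = some u ∧ l.getLast? = some v ∧ l.Chain' (fun a b => 0 < G.μ a b)

/-- `CONN_G(u,v)`: the maximum strength over all `u`–`v` paths. -/
def conn (u v : V) : ℝ :=
  sSup {s | ∃ l : List V, G.IsWalk u v l ∧ 2 ≤ l.length ∧ s = G.walkStrength l}

/-- The edge `(u,v)` is strong. -/
def StrongEdge (u v : V) : Prop :=
  0 < G.μ u v ∧ G.μ u v = G.conn u v

/-- `μ_s(u)`: the minimum membership value among strong edges at `u`
(`0` if `u` has no strong neighbor, via `Real.sInf_empty`). -/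
def mus (u : V) : ℝ :=
  sInf {x | ∃ v, G.StrongEdge u v ∧ x = G.μ u v}

/-- The strong neighborhood degree `d_SN(v)`. -/
def dSN [Fintype V] (v : V) : ℝ :=
  ∑ u ∈ Finset.univ.filter (fun u => G.StrongEdge v u), G.σ u

/-- `D` is a strong dominating set. -/
def IsStrongDomSet (D : Finset V) : Prop :=
  ∀ v, v ∉ D → ∃ u ∈ D, G.StrongEdge v u

/-- The weight of a strong dominating set. -/
def domWeight (D : Finset V) : ℝ := ∑ u ∈ D, G.mus u

/-- The strong domination number `γ_s(G)`. -/
def gammaS [Fintype V] : ℝ :=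
  sInf {w | ∃ D : Finset V, G.IsStrongDomSet D ∧ w = G.domWeight D}

/-- `f` is a strong-neighbors Roman dominating function (SNRDF). -/
def IsSNRDF (f : V → ℕ) : Prop :=
  (∀ v, f v ≤ 2) ∧ ∀ v, f v = 0 → ∃ u, G.StrongEdge v u ∧ f u = 2

/-- The weight of an SNRDF. -/
def snrdfWeight [Fintype V] (f : V → ℕ) : ℝ := ∑ v, (f v : ℝ) * G.mus v

/-- The strong-neighbors Roman domination number `γ_snR(G)`. -/
def gammaSnR [Fintype V] : ℝ :=
  sInf {w | ∃ f : V → ℕ, G.IsSNRDF f ∧ w = G.snrdfWeight f}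

/-- The fuzzy subgraph induced by the vertices satisfying `p`. -/
def induce (p : V → Prop) : FuzzyGraph {v // p v} where
  σ v := G.σ v
  μ u v := G.μ u v
  σ_nonneg v := G.σ_nonneg v
  σ_le_one v := G.σ_le_one v
  μ_nonneg u v := G.μ_nonneg u v
  μ_symm u v := G.μ_symm u v
  μ_le u v := G.μ_le u v
  μ_irrefl v := G.μ_irrefl v

/-- The minimum membership value among the strong edges of `G`. -/
def muMin : ℝ := sInf {x | ∃ u v, G.StrongEdge u v ∧ x = G.μ u v}

/-- The complement of a fuzzy graph. -/
def compl : FuzzyGraph V where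
  σ := G.σ
  μ u v := if u = v then 0 else min (G.σ u) (G.σ v) - G.μ u v
  σ_nonneg := G.σ_nonneg
  σ_le_one := G.σ_le_one
  μ_nonneg u v := by
    by_cases h : u = v
    · simp [h]
    · simp only [if_neg h, sub_nonneg]
      exact G.μ_le u v
  μ_symm u v := by
    by_cases h : u = v
    · simp [h]
    · have h' : ¬ v = u := fun hh => h hh.symm
      simp only [if_neg h, if_neg h', min_comm (G.σ u), G.μ_symm u v]
  μ_le u v := by
    by_cases h : u = v
    · subst h
      simp only [if_pos rfl, le_min_iff]
      exact ⟨G.σ_nonneg u, G.σ_nonneg u⟩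
    · simp only [if_neg h]
      have := G.μ_nonneg u v
      linarith
  μ_irrefl v := by simp

end FuzzyGraph

/-!
Write `S = ∑ u, ∑ v, μ u v = 2q`. A maximal strongly independent set `D` is strongly dominating,
so `2 • 1_D` is an SNRDF of weight `2 ∑_{v ∈ D} μ_s v`; each `v ∈ D` with a strong neighbour has
one outside `D`, so this is at most twice the weight of the edges leaving `D`, hence at most `S`.
Equality needs `μ = 0` inside `D` and a single edge leaving each `v ∈ D`, so taking `D ∋ x, y`
for a positive non-strong edge `xy`, or `D ∋ x` for a vertex with two strong neighbours, gives
`γ_snR < S`. Conversely, if the strong edges form a matching carrying all of `μ`, then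
`∑ v, μ u v = μ_s u` and `f u + f v ≥ 2` on every positive edge `uv`, so summing
`2 μ u v ≤ (f u + f v) μ u v` over all pairs gives `S ≤ w(f)`.
-/

theorem List.zip_tail_reverse {α : Type*} (l : List α) :
    l.reverse.zip l.reverse.tail = ((l.zip l.tail).map Prod.swap).reverse := by
  refine List.ext_getElem (by simp) fun i _ _ => ?_
  grind

namespace FuzzyGraph

variable {V : Type*} (G : FuzzyGraph V)

lemma walkStrength_reverse (l : List V) : G.walkStrength l.reverse = G.walkStrength l := by
  have hswap : ((fun p : V × V => G.μ p.1 p.2) ∘ Prod.swap) = fun p => G.μ p.1 p.2 :=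
    funext fun p => G.μ_symm p.2 p.1
  rw [walkStrength, walkStrength, List.zip_tail_reverse, List.map_reverse, List.map_map, hswap]
  exact (List.reverse_perm _).foldr_eq 1

variable {G} in
lemma IsWalk.reverse {u v : V} {l : List V} (h : G.IsWalk u v l) : G.IsWalk v u l.reverse := by
  obtain ⟨hu, hv, hchain⟩ := h
  refine ⟨by rwa [List.head?_reverse], by rwa [List.getLast?_reverse], ?_⟩
  rw [List.Chain', List.isChain_reverse]
  exact hchain.imp fun a b hab => by rwa [G.μ_symm]

lemma conn_comm (u v : V) : G.conn u v = G.conn v u := by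
  suffices h : ∀ u v, {s | ∃ l, G.IsWalk u v l ∧ 2 ≤ l.length ∧ s = G.walkStrength l} ⊆
      {s | ∃ l, G.IsWalk v u l ∧ 2 ≤ l.length ∧ s = G.walkStrength l} from
    congrArg sSup ((h u v).antisymm (h v u))
  rintro u v s ⟨l, hw, hl, rfl⟩
  exact ⟨l.reverse, hw.reverse, by rwa [List.length_reverse], (G.walkStrength_reverse l).symm⟩

variable {G}

lemma StrongEdge.pos {u v : V} (h : G.StrongEdge u v) : 0 < G.μ u v := h.1

lemma StrongEdge.symm {u v : V} (h : G.StrongEdge u v) : G.StrongEdge v u :=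
  ⟨G.μ_symm u v ▸ h.1, by rw [← G.μ_symm, ← G.conn_comm]; exact h.2⟩

lemma StrongEdge.ne {u v : V} (h : G.StrongEdge u v) : u ≠ v := by
  rintro rfl
  exact h.pos.ne' (G.μ_irrefl u)

variable (G)

def strongGraph : SimpleGraph V where
  Adj := G.StrongEdge
  symm := ⟨fun _ _ => StrongEdge.symm⟩
  loopless := ⟨fun _ h => h.ne rfl⟩

lemma mus_nonneg (u : V) : 0 ≤ G.mus u :=
  Real.sInf_nonneg <| by rintro _ ⟨v, -, rfl⟩; exact G.μ_nonneg u v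

variable {G}

lemma mus_le {u v : V} (h : G.StrongEdge u v) : G.mus u ≤ G.μ u v :=
  csInf_le ⟨0, by rintro _ ⟨w, -, rfl⟩; exact G.μ_nonneg u w⟩ ⟨v, h, rfl⟩

lemma mus_eq_zero {u : V} (h : ∀ v, ¬ G.StrongEdge u v) : G.mus u = 0 := by
  have : {x | ∃ v, G.StrongEdge u v ∧ x = G.μ u v} = ∅ :=
    Set.eq_empty_of_forall_notMem fun _ ⟨v, hv, _⟩ => h v hv
  rw [mus, this, Real.sInf_empty]

lemma mus_eq_of_unique {u v : V} (h : G.StrongEdge u v)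
    (huniq : ∀ w, G.StrongEdge u w → w = v) : G.mus u = G.μ u v := by
  have : {x | ∃ w, G.StrongEdge u w ∧ x = G.μ u w} = {G.μ u v} := by
    ext x
    constructor
    · rintro ⟨w, hw, rfl⟩
      rw [huniq w hw, Set.mem_singleton_iff]
    · rintro rfl
      exact ⟨v, h, rfl⟩
  rw [mus, this, csInf_singleton]

lemma sum_sum_μ_nonneg (s t : Finset V) : 0 ≤ ∑ u ∈ s, ∑ v ∈ t, G.μ u v :=
  Finset.sum_nonneg fun u _ => Finset.sum_nonneg fun v _ => G.μ_nonneg u v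

lemma notMem_of_strongEdge {D : Finset V} (hD : G.strongGraph.IsIndepSet D) {v w : V}
    (hv : v ∈ D) (h : G.StrongEdge v w) : w ∉ D :=
  fun hw => hD hv hw h.ne h

lemma isSNRDF_two_indicator {D : Finset V} (hD : G.IsStrongDomSet D) :
    G.IsSNRDF fun v => if v ∈ D then 2 else 0 := by
  refine ⟨fun v => by dsimp only; split_ifs <;> omega, fun v hv => ?_⟩
  obtain ⟨u, hu, hvu⟩ := hD v (by simpa using hv)
  exact ⟨u, hvu, if_pos hu⟩

lemma eq_two_of_eq_zero {f : V → ℕ} (hf : G.IsSNRDF f) {u v : V}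
    (hA : ∀ v, 0 < G.μ u v → G.StrongEdge u v) (hB : (∀ v, G.μ u v = 0) ∨ ∃! v, G.StrongEdge u v)
    (huv : 0 < G.μ u v) (hu : f u = 0) : f v = 2 := by
  obtain ⟨w, huw, hw⟩ := hf.2 u hu
  rcases hB with hiso | huniq
  · exact absurd (hiso v) huv.ne'
  · rwa [← huniq.unique huw (hA v huv)]

lemma two_le_add_of_pos {f : V → ℕ} (hf : G.IsSNRDF f)
    (hA : ∀ u v, 0 < G.μ u v → G.StrongEdge u v)
    (hB : ∀ u, (∀ v, G.μ u v = 0) ∨ ∃! v, G.StrongEdge u v) {u v : V} (huv : 0 < G.μ u v) :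
    2 ≤ f u + f v := by
  have hvu : 0 < G.μ v u := G.μ_symm u v ▸ huv
  by_cases hu : f u = 0
  · rw [hu, eq_two_of_eq_zero hf (hA u) (hB u) huv hu]
  by_cases hv : f v = 0
  · rw [hv, eq_two_of_eq_zero hf (hA v) (hB v) hvu hv]
  omega

section Finite

variable [Fintype V]

lemma gammaSnR_le_snrdfWeight {f : V → ℕ} (hf : G.IsSNRDF f) : G.gammaSnR ≤ G.snrdfWeight f :=
  csInf_le ⟨0, by
    rintro _ ⟨g, -, rfl⟩
    exact Finset.sum_nonneg fun v _ => mul_nonneg (Nat.cast_nonneg _) (G.mus_nonneg v)⟩ ⟨f, hf, rfl⟩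

lemma le_gammaSnR {a : ℝ} (h : ∀ f, G.IsSNRDF f → a ≤ G.snrdfWeight f) : a ≤ G.gammaSnR :=
  le_csInf ⟨_, fun _ => 2, ⟨fun _ => le_rfl, fun _ h => absurd h two_ne_zero⟩, rfl⟩
    fun _ ⟨f, hf, hw⟩ => hw ▸ h f hf

lemma exists_isStrongDomSet_superset {I : Finset V} (hI : G.strongGraph.IsIndepSet I) :
    ∃ D : Finset V, I ⊆ D ∧ G.strongGraph.IsIndepSet D ∧ G.IsStrongDomSet D := by
  obtain ⟨D, hID, hmax⟩ :=
    Finite.exists_le_maximal (p := fun D : Finset V => G.strongGraph.IsIndepSet D) hI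
  refine ⟨D, hID, hmax.prop, fun v hv => ?_⟩
  by_contra! hnone
  have hins : G.strongGraph.IsIndepSet (insert v D : Finset V) := by
    rw [Finset.coe_insert, SimpleGraph.IsIndepSet, Set.pairwise_insert]
    exact ⟨hmax.prop, fun u hu _ => ⟨hnone u hu, fun h => hnone u hu h.symm⟩⟩
  exact hv (hmax.le_of_ge hins (Finset.subset_insert v D) (Finset.mem_insert_self v D))

def cut (D : Finset V) : ℝ := ∑ u ∈ D, ∑ v ∈ Dᶜ, G.μ u v

lemma snrdfWeight_two_indicator (D : Finset V) :
    G.snrdfWeight (fun v => if v ∈ D then 2 else 0) = 2 * ∑ v ∈ D, G.mus v := by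
  simp [snrdfWeight, Finset.mul_sum]

lemma gammaSnR_le_two_mul_sum_mus {D : Finset V} (hD : G.IsStrongDomSet D) :
    G.gammaSnR ≤ 2 * ∑ v ∈ D, G.mus v :=
  (gammaSnR_le_snrdfWeight (isSNRDF_two_indicator hD)).trans_eq (snrdfWeight_two_indicator D)

lemma mus_le_sum_compl {D : Finset V} (hD : G.strongGraph.IsIndepSet D) {v : V} (hv : v ∈ D) :
    G.mus v ≤ ∑ w ∈ Dᶜ, G.μ v w := by
  by_cases h : ∃ w, G.StrongEdge v w
  · obtain ⟨w, hw⟩ := h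
    calc G.mus v ≤ G.μ v w := mus_le hw
      _ ≤ ∑ w ∈ Dᶜ, G.μ v w := Finset.single_le_sum (fun w _ => G.μ_nonneg v w)
          (Finset.mem_compl.2 (notMem_of_strongEdge hD hv hw))
  · rw [mus_eq_zero (not_exists.1 h)]
    exact Finset.sum_nonneg fun w _ => G.μ_nonneg v w

lemma mus_lt_sum_compl {D : Finset V} (hD : G.strongGraph.IsIndepSet D) {v y z : V} (hv : v ∈ D)
    (hy : G.StrongEdge v y) (hz : G.StrongEdge v z) (hyz : y ≠ z) :
    G.mus v < ∑ w ∈ Dᶜ, G.μ v w := by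
  have hsub : ({y, z} : Finset V) ⊆ Dᶜ := by
    simp [Finset.insert_subset_iff, notMem_of_strongEdge hD hv hy, notMem_of_strongEdge hD hv hz]
  calc G.mus v ≤ G.μ v z := mus_le hz
    _ < G.μ v y + G.μ v z := lt_add_of_pos_left _ hy.pos
    _ = ∑ w ∈ {y, z}, G.μ v w := (Finset.sum_pair hyz).symm
    _ ≤ ∑ w ∈ Dᶜ, G.μ v w :=
      Finset.sum_le_sum_of_subset_of_nonneg hsub fun w _ _ => G.μ_nonneg v w

lemma sum_mus_le_cut {D : Finset V} (hD : G.strongGraph.IsIndepSet D) :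
    ∑ v ∈ D, G.mus v ≤ G.cut D :=
  Finset.sum_le_sum fun _ hv => mus_le_sum_compl hD hv

lemma sum_mus_lt_cut {D : Finset V} (hD : G.strongGraph.IsIndepSet D) {x y z : V} (hx : x ∈ D)
    (hy : G.StrongEdge x y) (hz : G.StrongEdge x z) (hyz : y ≠ z) :
    ∑ v ∈ D, G.mus v < G.cut D :=
  Finset.sum_lt_sum (fun _ hv => mus_le_sum_compl hD hv) ⟨x, hx, mus_lt_sum_compl hD hx hy hz hyz⟩

variable (G) in
lemma two_mul_cut_add_sum_le (D : Finset V) :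
    2 * G.cut D + ∑ u ∈ D, ∑ v ∈ D, G.μ u v ≤ ∑ u, ∑ v, G.μ u v := by
  have hcross : ∑ u ∈ Dᶜ, ∑ v ∈ D, G.μ u v = G.cut D := by
    rw [cut, Finset.sum_comm]
    exact Finset.sum_congr rfl fun u _ => Finset.sum_congr rfl fun v _ => G.μ_symm v u
  have hsplit : ∑ u, ∑ v, G.μ u v = ∑ u ∈ D, ∑ v ∈ D, G.μ u v + G.cut D
      + (∑ u ∈ Dᶜ, ∑ v ∈ D, G.μ u v + ∑ u ∈ Dᶜ, ∑ v ∈ Dᶜ, G.μ u v) := by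
    simp only [cut, ← Finset.sum_add_distrib, Finset.sum_add_sum_compl]
  linarith [G.sum_sum_μ_nonneg Dᶜ Dᶜ]

variable (G) in
lemma gammaSnR_le_sum_μ : G.gammaSnR ≤ ∑ u, ∑ v, G.μ u v := by
  obtain ⟨D, -, hI, hD⟩ := exists_isStrongDomSet_superset (G := G) (I := ∅) (by simp)
  linarith [gammaSnR_le_two_mul_sum_mus hD, sum_mus_le_cut hI, two_mul_cut_add_sum_le G D,
    G.sum_sum_μ_nonneg D D]

lemma gammaSnR_lt_of_not_strongEdge {x y : V} (hxy : 0 < G.μ x y) (hs : ¬ G.StrongEdge x y) :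
    G.gammaSnR < ∑ u, ∑ v, G.μ u v := by
  have hpair : G.strongGraph.IsIndepSet ({x, y} : Finset V) := by
    rw [Finset.coe_pair]
    exact Set.pairwise_pair.2 fun _ => ⟨hs, fun h => hs h.symm⟩
  obtain ⟨D, hxyD, hI, hD⟩ := exists_isStrongDomSet_superset hpair
  have hinner : G.μ x y ≤ ∑ u ∈ D, ∑ v ∈ D, G.μ u v :=
    calc G.μ x y ≤ ∑ v ∈ D, G.μ x v :=
          Finset.single_le_sum (fun v _ => G.μ_nonneg x v) (hxyD (by simp))
      _ ≤ ∑ u ∈ D, ∑ v ∈ D, G.μ u v :=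
          Finset.single_le_sum (f := fun u => ∑ v ∈ D, G.μ u v)
            (fun u _ => Finset.sum_nonneg fun v _ => G.μ_nonneg u v) (hxyD (by simp))
  linarith [gammaSnR_le_two_mul_sum_mus hD, sum_mus_le_cut hI, two_mul_cut_add_sum_le G D]

lemma gammaSnR_lt_of_strongEdge_ne {x y z : V} (hy : G.StrongEdge x y) (hz : G.StrongEdge x z)
    (hyz : y ≠ z) : G.gammaSnR < ∑ u, ∑ v, G.μ u v := by
  obtain ⟨D, hxD, hI, hD⟩ := exists_isStrongDomSet_superset (G := G) (I := {x}) (by simp)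
  linarith [gammaSnR_le_two_mul_sum_mus hD, sum_mus_lt_cut hI (hxD (by simp)) hy hz hyz,
    two_mul_cut_add_sum_le G D, G.sum_sum_μ_nonneg D D]

lemma sum_μ_eq_mus {u : V} (hA : ∀ v, 0 < G.μ u v → G.StrongEdge u v)
    (hB : (∀ v, G.μ u v = 0) ∨ ∃! v, G.StrongEdge u v) : ∑ v, G.μ u v = G.mus u := by
  rcases hB with hiso | ⟨w, hw, huniq⟩
  · rw [mus_eq_zero fun v hv => hv.pos.ne' (hiso v)]
    exact Finset.sum_eq_zero fun v _ => hiso v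
  · rw [mus_eq_of_unique hw huniq, Finset.sum_eq_single w _ (by simp)]
    intro v _ hvw
    by_contra hne
    exact hvw (huniq v (hA v ((G.μ_nonneg u v).lt_of_ne' hne)))

lemma sum_μ_le_snrdfWeight (hA : ∀ u v, 0 < G.μ u v → G.StrongEdge u v)
    (hB : ∀ u, (∀ v, G.μ u v = 0) ∨ ∃! v, G.StrongEdge u v) {f : V → ℕ} (hf : G.IsSNRDF f) :
    ∑ u, ∑ v, G.μ u v ≤ G.snrdfWeight f := by
  have hpair : ∀ u v, 2 * G.μ u v ≤ ((f u : ℝ) + f v) * G.μ u v := fun u v => by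
    rcases (G.μ_nonneg u v).eq_or_lt with h | h
    · simp [← h]
    · exact mul_le_mul_of_nonneg_right (by exact_mod_cast two_le_add_of_pos hf hA hB h) h.le
  have hswap : ∑ u, ∑ v, (f v : ℝ) * G.μ u v = ∑ u, ∑ v, (f u : ℝ) * G.μ u v := by
    rw [Finset.sum_comm]
    exact Finset.sum_congr rfl fun u _ => Finset.sum_congr rfl fun v _ => by rw [G.μ_symm]
  have hweight : ∑ u, ∑ v, (f u : ℝ) * G.μ u v = G.snrdfWeight f := by
    simp only [← Finset.mul_sum, sum_μ_eq_mus (hA _) (hB _), snrdfWeight]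
  have hdouble : 2 * ∑ u, ∑ v, G.μ u v ≤ 2 * G.snrdfWeight f :=
    calc 2 * ∑ u, ∑ v, G.μ u v = ∑ u, ∑ v, 2 * G.μ u v := by simp only [Finset.mul_sum]
      _ ≤ ∑ u, ∑ v, ((f u : ℝ) + f v) * G.μ u v :=
          Finset.sum_le_sum fun u _ => Finset.sum_le_sum fun v _ => hpair u v
      _ = ∑ u, ∑ v, (f u : ℝ) * G.μ u v + ∑ u, ∑ v, (f v : ℝ) * G.μ u v := by
          simp only [add_mul, Finset.sum_add_distrib]
      _ = 2 * G.snrdfWeight f := by rw [hswap, hweight, two_mul]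
  linarith

end Finite

end FuzzyGraph

theorem gammaSnR_eq_two_q_iff_general {V : Type*} [Fintype V]
    (G : FuzzyGraph V) :
    G.gammaSnR = 2 * ((∑ u : V, ∑ v : V, G.μ u v) / 2) ↔
      (∀ u v : V, 0 < G.μ u v → G.StrongEdge u v) ∧
        ∀ u : V, (∀ v, G.μ u v = 0) ∨ (∃! v, G.StrongEdge u v) := by
  rw [mul_div_cancel₀ _ two_ne_zero]
  constructor
  · intro h
    have hA : ∀ u v, 0 < G.μ u v → G.StrongEdge u v := fun u v huv => by
      by_contra hs
      exact (G.gammaSnR_lt_of_not_strongEdge huv hs).ne h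
    refine ⟨hA, fun u => or_iff_not_imp_left.2 fun hu => ?_⟩
    obtain ⟨v, hv⟩ := not_forall.1 hu
    have huv := hA u v ((G.μ_nonneg u v).lt_of_ne' hv)
    refine ⟨v, huv, fun w huw => ?_⟩
    by_contra hwv
    exact (G.gammaSnR_lt_of_strongEdge_ne huw huv hwv).ne h
  · rintro ⟨hA, hB⟩
    exact (G.gammaSnR_le_sum_μ).antisymm (G.le_gammaSnR fun f hf => G.sum_μ_le_snrdfWeight hA hB hf)

/-- `γ_snR(G) = 2q` iff all edges are strong and every vertex
is isolated or has a unique strong neighbor. -/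
theorem gammaSnR_eq_two_q_iff {V : Type*} [Fintype V]
    (G : FuzzyGraph V) (hnt : ∃ u v : V, 0 < G.μ u v) :
    G.gammaSnR = 2 * ((∑ u : V, ∑ v : V, G.μ u v) / 2) ↔
      (∀ u v : V, 0 < G.μ u v → G.StrongEdge u v) ∧
        ∀ u : V, (∀ v, G.μ u v = 0) ∨ (∃! v, G.StrongEdge u v) :=
  gammaSnR_eq_two_q_iff_general G
end
end

section
/- Let C_n (n ≥ 3) be a fuzzy cycle u_1,...,u_n,u_1 with μ(u_n,u_1) minimal among all edge memberships. Then every edge of C_n is strong if and only if there exists j ∈ {1,...,n−1} with μ(u_j, u_{j+1}) = μ(u_n, u_1) (i.e., the minimum edge membership is attained at least twice). -/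
noncomputable section
open scoped Classical
open Finset

/-!
Besides the edge itself, the only path between the end points of an edge `(i, i + 1)` of a cycle
is the rest of the cycle. If the minimum `μ(-1, 0)` is attained only once, the path `-1, -2, …, 1, 0` avoids the
weakest edge, so it is strictly stronger than `μ(-1, 0)` and `(-1, 0)` is not strong. Conversely,
every walk from `i` to `i + 1` has to leave the arc `i + 1, …, k` through `(i, i + 1)` or through
`(k, k + 1)`; taking for `k ≠ i` an edge no stronger than `(i, i + 1)` (a second copy of the
minimum when `i = -1`, and `k = -1` otherwise) bounds every such walk by `μ(i, i + 1)`.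
-/

lemma Relation.ReflTransGen.exists_rel_of_iff_not {α : Type*} {r : α → α → Prop} {p : α → Prop}
    {u v : α} (h : Relation.ReflTransGen r u v) (huv : p u ↔ ¬ p v) :
    ∃ a b, r a b ∧ (p a ↔ ¬ p b) := by
  induction h with
  | refl => exact (iff_not_self huv).elim
  | @tail b c _ hbc ih =>
    by_cases hb : p b ↔ ¬ p c
    · exact ⟨b, c, hbc, hb⟩
    · exact ih (by tauto)

namespace Fin

open Fin.CommRing

variable {n : ℕ} [NeZero n]

lemma val_neg_one_of_neZero : (-1 : Fin n).val = n - 1 := by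
  obtain ⟨m, rfl⟩ := Nat.exists_eq_add_one_of_ne_zero (NeZero.ne n)
  simp

lemma val_add_one_of_ne_neg_one {x : Fin n} (hx : x ≠ -1) : (x + 1).val = x.val + 1 := by
  refine val_add_one_of_lt' ?_
  have : x.val ≠ n - 1 := fun h => hx (Fin.ext (h.trans val_neg_one_of_neZero.symm))
  omega

lemma eq_neg_one_of_val_neg_one_le {x : Fin n} (hx : (-1 : Fin n).val ≤ x.val) : x = -1 := by
  have := x.isLt
  exact Fin.ext (by rw [val_neg_one_of_neZero] at *; omega)

/-- `(x - a).val ≤ (b - a).val` says that `x` lies on the arc `a, a + 1, …, b` of `Fin n`. -/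
lemma eq_or_add_one_eq_of_mem_arc_iff {a b x : Fin n}
    (h : (x - a).val ≤ (b - a).val ↔ ¬ (x + 1 - a).val ≤ (b - a).val) : x = b ∨ x + 1 = a := by
  by_cases hx : x - a = -1
  · right
    linear_combination hx
  · left
    rw [show x + 1 - a = x - a + 1 by ring, val_add_one_of_ne_neg_one hx] at h
    exact sub_left_injective (Fin.ext (by omega) : x - a = b - a)

lemma reflTransGen_neg_one {r : Fin n → Fin n → Prop} (h : ∀ x, x ≠ -1 → r (x + 1) x) (x : Fin n) :
    Relation.ReflTransGen r (-1) x := by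
  obtain ⟨m, rfl⟩ := Nat.exists_eq_add_one_of_ne_zero (NeZero.ne n)
  have hlast : (-1 : Fin (m + 1)) = last m := Fin.ext (by simp)
  induction x using Fin.reverseInduction with
  | last => rw [hlast]
  | cast i ih =>
    refine ih.tail ?_
    rw [← Fin.coeSucc_eq_succ]
    exact h _ (hlast ▸ Fin.castSucc_ne_last i)

end Fin

namespace FuzzyGraph

variable {V : Type*} (G : FuzzyGraph V)

lemma μ_le_one (u v : V) : G.μ u v ≤ 1 :=
  (G.μ_le u v).trans <| (min_le_left _ _).trans (G.σ_le_one u)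

lemma ne_of_μ_pos {u v : V} (h : 0 < G.μ u v) : u ≠ v := by
  rintro rfl
  exact h.ne' (G.μ_irrefl u)

lemma walkStrength_cons_cons (a b : V) (l : List V) :
    G.walkStrength (a :: b :: l) = min (G.μ a b) (G.walkStrength (b :: l)) :=
  rfl

lemma walkStrength_singleton (a : V) : G.walkStrength [a] = 1 :=
  rfl

lemma walkStrength_pair (u v : V) : G.walkStrength [u, v] = G.μ u v := by
  rw [walkStrength_cons_cons, walkStrength_singleton, min_eq_left (G.μ_le_one u v)]

lemma walkStrength_le_one : ∀ l : List V, G.walkStrength l ≤ 1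
  | [] | [_] => le_rfl
  | a :: b :: l => by
    rw [walkStrength_cons_cons]
    exact (min_le_right _ _).trans (walkStrength_le_one (b :: l))

lemma le_walkStrength_iff {c : ℝ} (hc : c ≤ 1) :
    ∀ l : List V, c ≤ G.walkStrength l ↔ l.IsChain (fun a b => c ≤ G.μ a b)
  | [] => iff_of_true hc .nil
  | [_] => iff_of_true hc (.singleton _)
  | a :: b :: l => by
    rw [walkStrength_cons_cons, le_min_iff, List.isChain_cons_cons, le_walkStrength_iff hc]

lemma lt_walkStrength_iff {c : ℝ} (hc : c < 1) :
    ∀ l : List V, c < G.walkStrength l ↔ l.IsChain (fun a b => c < G.μ a b)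
  | [] => iff_of_true hc .nil
  | [_] => iff_of_true hc (.singleton _)
  | a :: b :: l => by
    rw [walkStrength_cons_cons, lt_min_iff, List.isChain_cons_cons, lt_walkStrength_iff hc]

lemma IsWalk.reflTransGen {u v : V} {l : List V} (hw : G.IsWalk u v l) :
    Relation.ReflTransGen (fun a b => 0 < G.μ a b ∧ G.walkStrength l ≤ G.μ a b) u v := by
  obtain ⟨hu, hv, hchain⟩ := hw
  have hpos : 0 < G.walkStrength l := (G.lt_walkStrength_iff one_pos l).2 hchain
  obtain ⟨l, rfl⟩ := List.head?_eq_some_iff.1 hu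
  have hle := (G.le_walkStrength_iff (G.walkStrength_le_one (u :: l)) _).1 le_rfl
  exact Relation.ReflTransGen.mono (fun a b h => ⟨hpos.trans_le h, h⟩) _ _ <|
    List.relationReflTransGen_of_exists_isChain_cons l hle
      ((List.getLast_eq_iff_getLast?_eq_some _).2 hv)

lemma isWalk_pair {u v : V} (h : 0 < G.μ u v) : G.IsWalk u v [u, v] :=
  ⟨rfl, rfl, .cons_cons h (.singleton _)⟩

lemma walkStrength_le_conn {u v : V} {l : List V} (hw : G.IsWalk u v l) (hl : 2 ≤ l.length) :
    G.walkStrength l ≤ G.conn u v :=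
  le_csSup ⟨1, by rintro _ ⟨l, -, -, rfl⟩; exact G.walkStrength_le_one l⟩ ⟨l, hw, hl, rfl⟩

lemma μ_le_conn {u v : V} (h : 0 < G.μ u v) : G.μ u v ≤ G.conn u v := by
  simpa only [walkStrength_pair] using G.walkStrength_le_conn (G.isWalk_pair h) le_rfl

lemma conn_le {u v : V} {c : ℝ} (h : 0 < G.μ u v)
    (hc : ∀ l, G.IsWalk u v l → G.walkStrength l ≤ c) : G.conn u v ≤ c :=
  csSup_le ⟨_, [u, v], G.isWalk_pair h, le_rfl, rfl⟩ (by rintro _ ⟨l, hw, -, rfl⟩; exact hc l hw)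

lemma μ_lt_conn_of_reflTransGen {u v : V} (huv : u ≠ v)
    (h : Relation.ReflTransGen (fun a b => G.μ u v < G.μ a b) u v) : G.μ u v < G.conn u v := by
  obtain ⟨l, hchain, hlast⟩ := List.exists_isChain_cons_of_relationReflTransGen h
  obtain ⟨b, l, rfl⟩ : ∃ b t, l = b :: t := by
    cases l with
    | nil => exact absurd hlast huv
    | cons b t => exact ⟨b, t, rfl⟩
  have hlt_one : G.μ u v < 1 := (List.isChain_cons_cons.1 hchain).1.trans_le (G.μ_le_one u b)
  have hw : G.IsWalk u v (u :: b :: l) :=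
    ⟨rfl, (List.getLast_eq_iff_getLast?_eq_some _).1 hlast,
      hchain.imp fun a b h => (G.μ_nonneg u v).trans_lt h⟩
  calc G.μ u v < G.walkStrength (u :: b :: l) := (G.lt_walkStrength_iff hlt_one _).2 hchain
    _ ≤ G.conn u v := G.walkStrength_le_conn hw (by simp)

section Cycle

open Fin.CommRing

variable {n : ℕ} [NeZero n] {G : FuzzyGraph (Fin n)}

def IsCycle (G : FuzzyGraph (Fin n)) : Prop :=
  ∀ i j : Fin n, 0 < G.μ i j ↔ (j = i + 1 ∨ i = j + 1)

lemma IsCycle.walkStrength_le (hG : G.IsCycle) {i k : Fin n} (hki : k ≠ i) {l : List (Fin n)}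
    (hw : G.IsWalk i (i + 1) l) :
    G.walkStrength l ≤ G.μ i (i + 1) ∨ G.walkStrength l ≤ G.μ k (k + 1) := by
  set arc : Fin n → Prop := fun v => (v - (i + 1)).val ≤ (k - (i + 1)).val
  have hcut : arc i ↔ ¬ arc (i + 1) := by
    simp only [arc, sub_self, Fin.val_zero, zero_le, not_true, iff_false]
    intro h
    rw [show i - (i + 1) = -1 by ring] at h
    apply hki
    linear_combination Fin.eq_neg_one_of_val_neg_one_le h
  obtain ⟨a, b, ⟨hpos, hle⟩, hab⟩ := hw.reflTransGen.exists_rel_of_iff_not hcut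
  obtain ⟨x, hx, hxle⟩ : ∃ x, (arc x ↔ ¬ arc (x + 1)) ∧ G.walkStrength l ≤ G.μ x (x + 1) := by
    rcases (hG a b).1 hpos with rfl | rfl
    · exact ⟨a, hab, hle⟩
    · exact ⟨b, iff_not_comm.1 hab, G.μ_symm (b + 1) b ▸ hle⟩
  rcases Fin.eq_or_add_one_eq_of_mem_arc_iff hx with rfl | hxi
  · exact Or.inr hxle
  · exact Or.inl (add_right_cancel hxi ▸ hxle)

lemma IsCycle.conn_le (hG : G.IsCycle) {i k : Fin n} (hki : k ≠ i)
    (hk : G.μ k (k + 1) ≤ G.μ i (i + 1)) : G.conn i (i + 1) ≤ G.μ i (i + 1) :=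
  G.conn_le ((hG i (i + 1)).2 (Or.inl rfl)) fun _ hw =>
    (hG.walkStrength_le hki hw).elim id (·.trans hk)

end Cycle

end FuzzyGraph

theorem fuzzy_cycle_strong_iff_general {n : ℕ} [NeZero n]
    (G : FuzzyGraph (Fin n))
    (hadj : ∀ i j : Fin n, 0 < G.μ i j ↔ (j = i + 1 ∨ i = j + 1))
    (hmin : ∀ i : Fin n, G.μ (-1) 0 ≤ G.μ i (i + 1)) :
    (∀ i : Fin n, G.StrongEdge i (i + 1)) ↔
      ∃ i : Fin n, i ≠ -1 ∧ G.μ i (i + 1) = G.μ (-1) 0 := by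
  have hpos : ∀ i : Fin n, 0 < G.μ i (i + 1) := fun i => (hadj i (i + 1)).2 (Or.inl rfl)
  have hlast : (-1 : Fin n) + 1 = 0 := neg_add_cancel 1
  constructor
  · intro hstrong
    by_contra! hunique
    have hne : (-1 : Fin n) ≠ 0 := hlast ▸ G.ne_of_μ_pos (hpos (-1))
    have hlt : ∀ x : Fin n, x ≠ -1 → G.μ (-1) 0 < G.μ (x + 1) x := fun x hx =>
      G.μ_symm x (x + 1) ▸ (hmin x).lt_of_ne (hunique x hx).symm
    have hconn := G.μ_lt_conn_of_reflTransGen hne (Fin.reflTransGen_neg_one hlt 0)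
    exact hconn.ne (hlast ▸ (hstrong (-1)).2)
  · rintro ⟨j, hj, hjeq⟩ i
    refine ⟨hpos i, le_antisymm (G.μ_le_conn (hpos i)) ?_⟩
    obtain ⟨k, hki, hk⟩ : ∃ k, k ≠ i ∧ G.μ k (k + 1) ≤ G.μ i (i + 1) := by
      by_cases hi : i = -1
      · exact ⟨j, hi ▸ hj, by rw [hjeq, hi, hlast]⟩
      · exact ⟨-1, Ne.symm hi, hlast ▸ hmin i⟩
    exact FuzzyGraph.IsCycle.conn_le hadj hki hk

/-- a fuzzy cycle is strong iff its minimum edge membership is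
attained at least twice. -/
theorem fuzzy_cycle_strong_iff {n : ℕ} [NeZero n] (hn : 3 ≤ n)
    (G : FuzzyGraph (Fin n))
    (hadj : ∀ i j : Fin n, 0 < G.μ i j ↔ (j = i + 1 ∨ i = j + 1))
    (hmin : ∀ i : Fin n, G.μ (-1) 0 ≤ G.μ i (i + 1)) :
    (∀ i : Fin n, G.StrongEdge i (i + 1)) ↔
      ∃ i : Fin n, i ≠ -1 ∧ G.μ i (i + 1) = G.μ (-1) 0 :=
  fuzzy_cycle_strong_iff_general G hadj hmin
end
end
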